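/- arXiv:2406.07116 — 2 statements merged into one kernel-verified Lean document; each statement's English description precedes it below -/
import Mathlib

section
/- Let $s\ge 1$. Define for $\vec{k}=(k_1,\dots,k_6)\in\mathbb{Z}^6$ the quantities $\psi_{2s}(\vec{k}):=\sum_{j=1}^6(-1)^{j-1}|k_j|^{2s}$ and $\Omega(\vec{k}):=\sum_{j=1}^6(-1)^{j-1}k_j^2$. There exists a constant $C(s)>0$ such that for every $\vec{k}$ with $k_1-k_2+k_3-k_4+k_5-k_6=0$, one has $|\psi_{2s}(\vec{k})|\le C(s)\,|k_{(1)}|^{2s-2}\big(|\Omega(\vec{k})|+|k_{(3)}|^2\big)$, where $|k_{(1)}|\ge|k_{(2)}|\ge\cdots\ge|k_{(6)}|$ is a rearrangement of the $|k_j|$ in non-increasing order. -/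
/-!
Split both alternating sums into their two largest terms and the rest. A remaining term has
`|k_j| ≤ |k_(3)|`, so it contributes at most `|k_(1)|^(2s-2) |k_(3)|²` to `ψ_{2s}` and `|k_(3)|²`
to `Ω`. For the two largest terms `a ≥ b` one has `a^(2s) + b^(2s) ≤ a^(2s-2) (a² + b²)`, and
Bernoulli's inequality for `t ↦ t^s` gives `a^(2s) - b^(2s) ≤ s a^(2s-2) (a² - b²)`; so, whatever
their signs, the leading part of `ψ_{2s}` is bounded by `s |k_(1)|^(2s-2)` times the leading part
of `Ω`, which differs from `Ω` by at most `4 |k_(3)|²`.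
-/

open Real

namespace Real

theorem rpow_sub_rpow_le_mul_rpow_sub_one {x y p : ℝ} (hy : 0 ≤ y) (hyx : y ≤ x) (hp : 1 ≤ p) :
    x ^ p - y ^ p ≤ p * x ^ (p - 1) * (x - y) := by
  obtain rfl | hx := (hy.trans hyx).eq_or_lt
  · simp [le_antisymm hyx hy, zero_rpow (by linarith : p ≠ 0)]
  have hbern := one_add_mul_self_le_rpow_one_add
    (by linarith [div_nonneg hy hx.le] : -1 ≤ y / x - 1) hp
  rw [add_sub_cancel, div_rpow hy hx.le, le_div_iff₀ (rpow_pos_of_pos hx p)] at hbern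
  have hxp : x ^ p = x ^ (p - 1) * x := by rw [rpow_sub_one hx.ne', div_mul_cancel₀ _ hx.ne']
  have : (1 + p * (y / x - 1)) * x ^ p = x ^ p - p * x ^ (p - 1) * (x - y) := by
    rw [hxp]; field_simp; ring
  linarith

theorem rpow_two_mul_le_rpow_mul_sq {s x M : ℝ} (hs : 1 ≤ s) (hx : 0 ≤ x) (hxM : x ≤ M) :
    x ^ (2 * s) ≤ M ^ (2 * s - 2) * x ^ 2 := by
  obtain rfl | hx := hx.eq_or_lt
  · simp [zero_rpow (by linarith : 2 * s ≠ 0)]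
  calc x ^ (2 * s) = x ^ (2 * s - 2) * x ^ 2 := by
        rw [← rpow_natCast x 2, ← rpow_add hx]; norm_num
    _ ≤ M ^ (2 * s - 2) * x ^ 2 := by gcongr; linarith

theorem rpow_two_mul_sub_rpow_two_mul_le {s a b : ℝ} (hs : 1 ≤ s) (hb : 0 ≤ b) (hba : b ≤ a) :
    a ^ (2 * s) - b ^ (2 * s) ≤ s * a ^ (2 * s - 2) * (a ^ 2 - b ^ 2) := by
  have ha : 0 ≤ a := hb.trans hba
  have hsq (x : ℝ) (hx : 0 ≤ x) (q : ℝ) : (x ^ 2) ^ q = x ^ (2 * q) := by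
    rw [← rpow_natCast x 2, ← rpow_mul hx]; norm_num
  have := rpow_sub_rpow_le_mul_rpow_sub_one (sq_nonneg b) (pow_le_pow_left₀ hb hba 2) hs
  rw [hsq a ha, hsq b hb, hsq a ha] at this
  convert this using 1
  ring_nf

end Real

theorem abs_sign_mul_rpow_add_le {s a b ε δ : ℝ} (hs : 1 ≤ s) (hb : 0 ≤ b) (hba : b ≤ a)
    (hε : |ε| = 1) (hδ : |δ| = 1) :
    |ε * a ^ (2 * s) + δ * b ^ (2 * s)| ≤ s * a ^ (2 * s - 2) * |ε * a ^ 2 + δ * b ^ 2| := by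
  have ha : 0 ≤ a := hb.trans hba
  have hK : 0 ≤ s * a ^ (2 * s - 2) := by positivity
  have hsum : a ^ (2 * s) + b ^ (2 * s) ≤ s * a ^ (2 * s - 2) * (a ^ 2 + b ^ 2) := by
    have ha' := rpow_two_mul_le_rpow_mul_sq hs ha le_rfl
    have hb' := rpow_two_mul_le_rpow_mul_sq hs hb hba
    have hs' : a ^ (2 * s - 2) * (a ^ 2 + b ^ 2) ≤ s * a ^ (2 * s - 2) * (a ^ 2 + b ^ 2) := by
      gcongr; exact le_mul_of_one_le_left (by positivity) hs
    linarith
  have hdiff := rpow_two_mul_sub_rpow_two_mul_le hs hb hba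
  have hpow : b ^ (2 * s) ≤ a ^ (2 * s) := by gcongr
  have hb0 : 0 ≤ b ^ (2 * s) := by positivity
  have hsq : b ^ 2 ≤ a ^ 2 := pow_le_pow_left₀ hb hba 2
  have habs := mul_le_mul_of_nonneg_left (le_abs_self (ε * a ^ 2 + δ * b ^ 2)) hK
  have hnegabs := mul_le_mul_of_nonneg_left (neg_abs_le (ε * a ^ 2 + δ * b ^ 2)) hK
  rw [abs_le]
  rcases (abs_eq zero_le_one).1 hε with rfl | rfl <;>
    rcases (abs_eq zero_le_one).1 hδ with rfl | rfl <;> constructor <;> nlinarith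

theorem abs_sum_mul_le_card_mul {ι : Type*} [Fintype ι] {ε x : ι → ℝ} {c : ℝ}
    (hε : ∀ i, |ε i| = 1) (hx : ∀ i, |x i| ≤ c) :
    |∑ i, ε i * x i| ≤ Fintype.card ι * c :=
  calc |∑ i, ε i * x i| ≤ ∑ i, |ε i * x i| := Finset.abs_sum_le_sum_abs _ _
    _ ≤ ∑ _i : ι, c := Finset.sum_le_sum fun i _ => by rw [abs_mul, hε, one_mul]; exact hx i
    _ = Fintype.card ι * c := by simp

theorem abs_sum_sign_mul_rpow_le {n : ℕ} {s : ℝ} (hs : 1 ≤ s) {a ε : Fin (n + 3) → ℝ}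
    (ha : ∀ i, 0 ≤ a i) (hanti : Antitone a) (hε : ∀ i, |ε i| = 1) :
    |∑ i, ε i * a i ^ (2 * s)| ≤
      (s + 1) * (n + 1) * a 0 ^ (2 * s - 2) * (|∑ i, ε i * a i ^ 2| + a 2 ^ 2) := by
  have hle_two (i : Fin (n + 1)) : a i.succ.succ ≤ a 2 :=
    hanti (Fin.le_def.2 (by simp [Nat.mod_eq_of_lt]))
  have hhead := abs_sign_mul_rpow_add_le hs (ha 1) (hanti (Fin.zero_le 1)) (hε 0) (hε 1)
  have htail_sq : |∑ i : Fin (n + 1), ε i.succ.succ * a i.succ.succ ^ 2| ≤ (n + 1) * a 2 ^ 2 := by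
    simpa using abs_sum_mul_le_card_mul (fun i => hε i.succ.succ) fun i : Fin (n + 1) => by
      rw [abs_of_nonneg (sq_nonneg _)]
      exact pow_le_pow_left₀ (ha _) (hle_two i) 2
  have htail : |∑ i : Fin (n + 1), ε i.succ.succ * a i.succ.succ ^ (2 * s)| ≤
      (n + 1) * (a 0 ^ (2 * s - 2) * a 2 ^ 2) := by
    simpa using abs_sum_mul_le_card_mul (fun i => hε i.succ.succ) fun i : Fin (n + 1) => by
      rw [abs_of_nonneg (rpow_nonneg (ha _) _)]
      exact (rpow_two_mul_le_rpow_mul_sq hs (ha _) (hanti (Fin.zero_le _))).trans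
        (mul_le_mul_of_nonneg_left (pow_le_pow_left₀ (ha _) (hle_two i) 2) (rpow_nonneg (ha 0) _))
  simp only [Fin.sum_univ_succ (n := n + 2), Fin.sum_univ_succ (n := n + 1), Fin.succ_zero_eq_one,
    ← add_assoc]
  set Ω₀ := ε 0 * a 0 ^ 2 + ε 1 * a 1 ^ 2
  set Ω₁ := ∑ i : Fin (n + 1), ε i.succ.succ * a i.succ.succ ^ 2
  have hΩ₀ : |Ω₀| ≤ |Ω₀ + Ω₁| + (n + 1) * a 2 ^ 2 := by
    have := abs_sub (Ω₀ + Ω₁) Ω₁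
    rw [add_sub_cancel_right] at this
    linarith
  calc _ ≤ _ := abs_add_le _ _
    _ ≤ s * a 0 ^ (2 * s - 2) * |Ω₀| + (n + 1) * (a 0 ^ (2 * s - 2) * a 2 ^ 2) :=
      add_le_add hhead htail
    _ ≤ s * a 0 ^ (2 * s - 2) * (|Ω₀ + Ω₁| + (n + 1) * a 2 ^ 2) +
        (n + 1) * (a 0 ^ (2 * s - 2) * a 2 ^ 2) := by
      gcongr
      exact mul_nonneg (by linarith) (rpow_nonneg (ha 0) _)
    _ ≤ _ := by
      have := mul_nonneg (mul_nonneg (rpow_nonneg (ha 0) (2 * s - 2)) (abs_nonneg (Ω₀ + Ω₁)))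
        (by positivity : (0 : ℝ) ≤ s * n + n + 1)
      linarith

/-- Estimate on the symmetrized weight `ψ_{2s}`: for `s ≥ 1` there is `C(s) > 0` such that
whenever `k₁ - k₂ + k₃ - k₄ + k₅ - k₆ = 0` (with `τ` a permutation arranging the `|k_j|`
in non-increasing order),
`|ψ_{2s}(k)| ≤ C(s) |k_(1)|^(2s-2) (|Ω(k)| + |k_(3)|²)`. -/
theorem stmt2 (s : ℝ) (hs : 1 ≤ s) : ∃ C : ℝ, 0 < C ∧
    ∀ (k : Fin 6 → ℤ) (τ : Equiv.Perm (Fin 6)),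
      (∀ i j : Fin 6, i ≤ j → |k (τ j)| ≤ |k (τ i)|) →
      (∑ j : Fin 6, (-1 : ℤ) ^ (j : ℕ) * k j) = 0 →
      |∑ j : Fin 6, (-1 : ℝ) ^ (j : ℕ) * (|k j| : ℝ) ^ (2 * s)| ≤
        C * (|k (τ 0)| : ℝ) ^ (2 * s - 2) *
          ((|∑ j : Fin 6, (-1 : ℤ) ^ (j : ℕ) * (k j) ^ 2| : ℝ) + (|k (τ 2)| : ℝ) ^ 2) := by
  refine ⟨(s + 1) * 4, by positivity, fun k τ hτ _ => ?_⟩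
  have key := abs_sum_sign_mul_rpow_le (n := 3) hs (a := fun i => |(k (τ i) : ℝ)|)
    (ε := fun i => (-1) ^ (τ i : ℕ)) (fun i => abs_nonneg _)
    (fun i j hij => by simpa [← Int.cast_abs] using hτ i j hij) (fun i => by simp)
  push_cast
  rw [← Equiv.sum_comp τ, ← Equiv.sum_comp τ (fun j => (-1 : ℝ) ^ (j : ℕ) * (k j : ℝ) ^ 2)]
  norm_num [sq_abs] at key ⊢
  exact key
end

section
/- Let $F:[0,\infty)\to[0,\infty)$ (or $F:\mathbb{R}\to[0,1]$) be differentiable and suppose there exist $C>0$ and $\beta\in(0,1)$ such that for every $p\in[1,\infty)$ and every $t$, $|F'(t)|\le C\,p^{\beta}\,F(t)^{1-1/p}$, with $0\le F\le 1$. Then choosing $p = 1+\log(1/F(0))$ yields, for all $t$, $F(t)\le F(0)\,\exp\big(C\,|t|\,e\,(1-\log F(0))^{\beta}\big)$ whenever $F(0)>0$. -/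
/-!
With `c = 1/p`, the inequality `|F'| ≤ L F^(1-c)` makes `F^c` `(L/p)`-Lipschitz,
so `F(t) ≤ (F(0)^c + (L/p)|t|)^p ≤ F(0) exp(L|t| / F(0)^c)`. The choice `p = 1 - log F(0)` makes
`F(0)^c ≥ e⁻¹`, and `L = C p^β` then gives the bound.
-/

open Real Filter Topology

lemma abs_mul_rpow_sub_one_mul_le {x ε c d L : ℝ} (hx : 0 ≤ x) (hε : 0 < ε) (hc : 0 < c)
    (hc1 : c ≤ 1) (hL : 0 ≤ L) (hd : |d| ≤ L * x ^ (1 - c)) :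
    |c * (x + ε) ^ (c - 1) * d| ≤ c * L := by
  have hxε : 0 < x + ε := by linarith
  calc |c * (x + ε) ^ (c - 1) * d| = c * (x + ε) ^ (c - 1) * |d| := by
        rw [abs_mul, abs_of_nonneg (by positivity)]
    _ ≤ c * (x + ε) ^ (c - 1) * (L * (x + ε) ^ (1 - c)) := by
        gcongr
        exact hd.trans (by gcongr; linarith)
    _ = c * L * ((x + ε) ^ (c - 1) * (x + ε) ^ (1 - c)) := by ring
    _ = c * L := by rw [← rpow_add hxε]; simp

section Integration

variable {f : ℝ → ℝ} {L p : ℝ}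

/-- The shift by `ε` keeps `f + ε` away from `0`, where `x ↦ x ^ (1/p)` is not differentiable. -/
lemma add_rpow_one_div_le_of_abs_deriv_le {ε : ℝ} (hf : Differentiable ℝ f) (hf0 : ∀ t, 0 ≤ f t)
    (hp : 1 ≤ p) (hL : 0 ≤ L) (hε : 0 < ε) (hdf : ∀ t, |deriv f t| ≤ L * f t ^ (1 - 1 / p))
    (s t : ℝ) : (f t + ε) ^ (1 / p) ≤ (f s + ε) ^ (1 / p) + L / p * |t - s| := by
  have hc : 0 < 1 / p := by positivity
  have hc1 : 1 / p ≤ 1 := by rw [div_le_one (by linarith)]; exact hp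
  set g : ℝ → ℝ := fun t => (f t + ε) ^ (1 / p)
  have hg : ∀ t, HasDerivAt g (1 / p * (f t + ε) ^ (1 / p - 1) * deriv f t) t := fun t =>
    (hasDerivAt_rpow_const (Or.inl (by linarith [hf0 t]))).comp t
      ((hf t).hasDerivAt.add_const ε)
  have hg' : ∀ t, ‖deriv g t‖ ≤ L / p := fun t => by
    rw [(hg t).deriv, norm_eq_abs]
    exact (abs_mul_rpow_sub_one_mul_le (hf0 t) hε hc hc1 hL (hdf t)).trans_eq (by ring)
  have hlip := convex_univ.norm_image_sub_le_of_norm_deriv_le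
    (fun x _ => (hg x).differentiableAt) (fun x _ => hg' x) (Set.mem_univ s) (Set.mem_univ t)
  rw [norm_eq_abs, norm_eq_abs] at hlip
  linarith [le_abs_self (g t - g s)]

lemma rpow_one_div_le_of_abs_deriv_le (hf : Differentiable ℝ f) (hf0 : ∀ t, 0 ≤ f t)
    (hp : 1 ≤ p) (hL : 0 ≤ L) (hdf : ∀ t, |deriv f t| ≤ L * f t ^ (1 - 1 / p)) (s t : ℝ) :
    f t ^ (1 / p) ≤ f s ^ (1 / p) + L / p * |t - s| := by
  have hc : 0 ≤ 1 / p := by positivity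
  have hlim : ∀ x, Tendsto (fun ε : ℝ => (x + ε) ^ (1 / p)) (𝓝[>] 0) (𝓝 (x ^ (1 / p))) := fun x => by
    have : ContinuousAt (fun ε : ℝ => (x + ε) ^ (1 / p)) 0 :=
      (continuousAt_const.add continuousAt_id).rpow_const (Or.inr hc)
    simpa using this.tendsto.mono_left nhdsWithin_le_nhds
  refine le_of_tendsto_of_tendsto (hlim (f t)) ((hlim (f s)).add_const _) ?_
  filter_upwards [self_mem_nhdsWithin] with ε hε
  exact add_rpow_one_div_le_of_abs_deriv_le hf hf0 hp hL hε hdf s t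

end Integration

lemma add_rpow_le_rpow_mul_exp {A M p : ℝ} (hA : 0 < A) (hM : 0 ≤ M) (hp : 0 ≤ p) :
    (A + M) ^ p ≤ A ^ p * exp (p * M / A) := by
  calc (A + M) ^ p = A ^ p * (1 + M / A) ^ p := by
        rw [← mul_rpow hA.le (by positivity), mul_add, mul_div_cancel₀ _ hA.ne', mul_one]
    _ ≤ A ^ p * exp (M / A) ^ p := by
        gcongr
        linarith [add_one_le_exp (M / A)]
    _ = A ^ p * exp (p * M / A) := by rw [← exp_mul]; ring_nf

lemma exp_neg_one_le_rpow_one_div_one_sub_log {a : ℝ} (ha : 0 < a) (ha1 : a ≤ 1) :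
    exp (-1) ≤ a ^ (1 / (1 - log a)) := by
  have hp : 0 < 1 - log a := by linarith [log_nonpos ha.le ha1]
  rw [rpow_def_of_pos ha, exp_le_exp, ← div_eq_mul_one_div, le_div_iff₀ hp]
  linarith

theorem stmt5_general (F : ℝ → ℝ) (C β : ℝ) (hC : 0 < C)
    (hdiff : Differentiable ℝ F) (hF0 : ∀ t, 0 ≤ F t) (hF1 : ∀ t, F t ≤ 1)
    (hineq : ∀ p : ℝ, 1 ≤ p → ∀ t : ℝ, |deriv F t| ≤ C * p ^ β * (F t) ^ (1 - 1 / p))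
    (hpos : 0 < F 0) :
    ∀ t : ℝ, F t ≤ F 0 * Real.exp (C * |t| * Real.exp 1 * (1 - Real.log (F 0)) ^ β) := by
  intro t
  set p := 1 - log (F 0)
  set L := C * p ^ β
  set A := F 0 ^ (1 / p)
  have hp : 1 ≤ p := by linarith [log_nonpos hpos.le (hF1 0)]
  have hL : 0 ≤ L := by positivity
  have hA : 0 < A := by positivity
  have hAe : A⁻¹ ≤ exp 1 := by
    rw [inv_le_comm₀ hA (exp_pos 1), ← exp_neg]
    exact exp_neg_one_le_rpow_one_div_one_sub_log hpos (hF1 0)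
  have hAp : A ^ p = F 0 := by
    rw [← rpow_mul hpos.le, one_div_mul_cancel (by linarith), rpow_one]
  have hFt : F t ^ (1 / p) ≤ A + L / p * |t| := by
    simpa only [sub_zero] using rpow_one_div_le_of_abs_deriv_le hdiff hF0 hp hL (hineq p hp) 0 t
  calc F t = (F t ^ (1 / p)) ^ p := by
        rw [← rpow_mul (hF0 t), one_div_mul_cancel (by linarith), rpow_one]
    _ ≤ (A + L / p * |t|) ^ p := rpow_le_rpow (rpow_nonneg (hF0 t) _) hFt (by linarith)
    _ ≤ A ^ p * exp (p * (L / p * |t|) / A) :=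
        add_rpow_le_rpow_mul_exp hA (by positivity) (by linarith)
    _ = F 0 * exp (L * |t| * A⁻¹) := by
        rw [hAp, ← mul_assoc, mul_div_cancel₀ _ (by linarith), div_eq_mul_inv]
    _ ≤ F 0 * exp (C * |t| * exp 1 * p ^ β) := by
        refine mul_le_mul_of_nonneg_left (exp_le_exp.mpr ?_) hpos.le
        calc L * |t| * A⁻¹ ≤ L * |t| * exp 1 := by gcongr
          _ = C * |t| * exp 1 * p ^ β := by ring

/-- Integrating the family of differential inequalities `|F'(t)| ≤ C p^β F(t)^(1-1/p)`
(for all `p ≥ 1`) for a differentiable function `0 ≤ F ≤ 1`, and optimizing with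
`p = 1 + log(1/F(0))`, yields
`F(t) ≤ F(0) * exp(C |t| e (1 - log F(0))^β)` whenever `F(0) > 0`. -/
theorem stmt5 (F : ℝ → ℝ) (C β : ℝ) (hC : 0 < C) (hβ : β ∈ Set.Ioo (0:ℝ) 1)
    (hdiff : Differentiable ℝ F) (hF0 : ∀ t, 0 ≤ F t) (hF1 : ∀ t, F t ≤ 1)
    (hineq : ∀ p : ℝ, 1 ≤ p → ∀ t : ℝ, |deriv F t| ≤ C * p ^ β * (F t) ^ (1 - 1 / p))
    (hpos : 0 < F 0) :
    ∀ t : ℝ, F t ≤ F 0 * Real.exp (C * |t| * Real.exp 1 * (1 - Real.log (F 0)) ^ β) :=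
  stmt5_general F C β hC hdiff hF0 hF1 hineq hpos
end
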